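/- arXiv:2211.07996 — 3 statements merged into one kernel-verified Lean document; each statement's English description precedes it below -/
import Mathlib

section
/- Fix integers r ≥ 1 and t ≥ 2. For every complex number z, lim_{s→∞} (1/C(r+s,r)) · Σ_{λ ∈ Par_{r,s}} z^{|core_t(λ)|} = Σ_{ρ} z^{|ρ|} · (1/t^r) · r!/(a_0(ρ)! a_1(ρ)! ··· a_{t−1}(ρ)!), where the sum on the right runs over all t-cores ρ ∈ Par_{r,rt} (every t-core with at most r parts lies in Par_{r,rt}). In other words, the probability generating function of the size of the t-core of a uniformly random partition in Par_{r,s} converges, as s → ∞, to the stated finite sum. -/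
/-!
The beta-set map identifies `Par_{r,s}` with the `r`-subsets of `{0, …, r+s-1}`, and the size of
the `t`-core only depends on the residue counts `a = (a_0, …, a_{t-1})` of the beta-set, a
composition of `r` into `t` parts. Exactly `∏ C(n_i, a_i)` subsets have counts `a`, where
`n_i ~ s/t` is the size of residue class `i`, so the probability of `a` tends to
`r! ∏ (1/t)^{a_i}/a_i!`. On the other side, a beta-set closed under `b ↦ b - t` is its own
justification, so the `t`-cores in `Par_{r,rt}` correspond to the compositions `a`, and `|ρ|`
is the core size attached to `a`.
-/

open Finset

/-- Partitions in the `r × s` rectangle: weakly decreasing `r`-tuples with parts at most `s`. -/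
def IsRectPartition (r s : ℕ) (lam : Fin r → ℕ) : Prop :=
  (∀ i j : Fin r, i ≤ j → lam j ≤ lam i) ∧ ∀ i, lam i ≤ s

/-- The beta-set `β(λ) = {λ_i + r − i : 1 ≤ i ≤ r}` (with 0-indexed `i`). -/
def betaSet (r : ℕ) (lam : Fin r → ℕ) : Finset ℕ :=
  Finset.image (fun i : Fin r => lam i + (r - 1 - (i : ℕ))) Finset.univ

/-- `λ` is a `t`-core: for every `b ∈ β(λ)` with `b ≥ t`, also `b − t ∈ β(λ)`. -/
def IsTCore (r t : ℕ) (lam : Fin r → ℕ) : Prop :=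
  ∀ b ∈ betaSet r lam, t ≤ b → b - t ∈ betaSet r lam

/-- `n_i = ⌊(r+s+t−1−i)/t⌋`. -/
def nres (r s t i : ℕ) : ℕ := (r + s + t - 1 - i) / t

/-- `a_i(λ) = #{b ∈ β(λ) : b ≡ i (mod t)}`. -/
def aCount (r t : ℕ) (lam : Fin r → ℕ) (i : ℕ) : ℕ :=
  ((betaSet r lam).filter fun b => b % t = i).card

/-- The justification `J(λ)`: in each residue class `i` mod `t`, the `a_i(λ)` smallest
nonnegative integers congruent to `i`. -/
def justification (r t : ℕ) (lam : Fin r → ℕ) : Finset ℕ :=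
  (Finset.range t).biUnion fun i =>
    (Finset.range (aCount r t lam i)).image fun m => i + m * t

/-- The size of the `t`-core of `λ`: `Σ_{b ∈ J(λ)} b − r(r−1)/2`. -/
def coreSize (r t : ℕ) (lam : Fin r → ℕ) : ℕ :=
  (∑ b ∈ justification r t lam, b) - r * (r - 1) / 2

open Filter Topology

section BetaSet

variable {r s : ℕ}

lemma Fin.add_sub_le_of_strictMono {g : Fin r → ℕ} (hg : StrictMono g) {i j : Fin r}
    (hij : i ≤ j) : g i + (j - i : ℕ) ≤ g j := by
  have hsub : (Icc i j).image g ⊆ Icc (g i) (g j) := by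
    intro x hx
    obtain ⟨k, hk, rfl⟩ := mem_image.1 hx
    rw [mem_Icc] at hk ⊢
    exact ⟨hg.monotone hk.1, hg.monotone hk.2⟩
  have hcard := card_le_card hsub
  rw [card_image_of_injective _ hg.injective, Fin.card_Icc, Nat.card_Icc] at hcard
  have : (i : ℕ) ≤ j := hij
  omega

lemma strictAnti_beta {lam : Fin r → ℕ} (hlam : Antitone lam) :
    StrictAnti fun i : Fin r => lam i + (r - 1 - i) := by
  intro i j hij
  have := hlam hij.le
  have : (i : ℕ) < j := hij
  have := j.isLt
  dsimp only
  omega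

lemma card_betaSet {lam : Fin r → ℕ} (hlam : Antitone lam) : #(betaSet r lam) = r := by
  rw [betaSet, card_image_of_injective _ (strictAnti_beta hlam).injective, card_univ,
    Fintype.card_fin]

lemma betaSet_subset_range {lam : Fin r → ℕ} (hlam : ∀ i, lam i ≤ s) :
    betaSet r lam ⊆ range (r + s) := by
  intro b hb
  obtain ⟨i, -, rfl⟩ := mem_image.1 hb
  have := hlam i
  have := i.isLt
  rw [mem_range]
  omega

lemma betaSet_injOn : Set.InjOn (betaSet r) {lam | Antitone lam} := by
  intro lam hlam mu hmu h
  have hrange := congrArg (fun B : Finset ℕ => (B : Set ℕ)) h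
  simp only [betaSet, coe_image, coe_univ, Set.image_univ] at hrange
  funext i
  have := congrFun (((strictAnti_beta hlam).range_inj (strictAnti_beta hmu)).1 hrange) i
  simpa using this

lemma sum_betaSet {lam : Fin r → ℕ} (hlam : Antitone lam) :
    ∑ b ∈ betaSet r lam, b = ∑ i, lam i + r * (r - 1) / 2 := by
  rw [betaSet, sum_image fun i _ j _ h => (strictAnti_beta hlam).injective h,
    sum_add_distrib, Fin.sum_univ_eq_sum_range (fun i => r - 1 - i),
    sum_range_reflect (fun i => i) r, sum_range_id]

lemma exists_isRectPartition_betaSet_eq {B : Finset ℕ} (hB : B ⊆ range (r + s))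
    (hcard : #B = r) : ∃ lam, IsRectPartition r s lam ∧ betaSet r lam = B := by
  -- `g` lists `B` increasingly, so `lam i := g i.rev - i.rev` inverts `betaSet`.
  set g := B.orderEmbOfFin hcard
  have hlt (k : Fin r) : g k < r + s := mem_range.1 (hB (B.orderEmbOfFin_mem hcard k))
  have hlow (k : Fin r) : (k : ℕ) ≤ g k := by
    have := Fin.add_sub_le_of_strictMono g.strictMono (i := ⟨0, k.pos⟩) (Nat.zero_le k)
    dsimp only at this
    omega
  have hup (k : Fin r) : g k + (r - 1 - k) < r + s := by
    have hk : r - 1 < r := Nat.sub_one_lt_of_lt k.isLt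
    have := Fin.add_sub_le_of_strictMono g.strictMono (j := ⟨r - 1, hk⟩)
      (Nat.le_sub_one_of_lt k.isLt)
    have := hlt ⟨r - 1, hk⟩
    dsimp only at *
    omega
  refine ⟨fun i => g i.rev - i.rev, ⟨fun i j hij => ?_, fun i => ?_⟩, ?_⟩
  · have := Fin.add_sub_le_of_strictMono g.strictMono (Fin.rev_le_rev.2 hij)
    have := hlow j.rev
    dsimp only
    omega
  · have := hup i.rev
    have := i.rev.isLt
    dsimp only
    omega
  · ext b
    have hrev (i : Fin r) : g i.rev - i.rev + (r - 1 - i) = g i.rev := by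
      have := hlow i.rev
      rw [Fin.val_rev] at this ⊢
      omega
    simp only [betaSet, hrev, mem_image, mem_univ, true_and]
    rw [← Set.mem_range, ← Function.comp_def g, Fin.rev_surjective.range_comp,
      range_orderEmbOfFin, mem_coe]

lemma image_betaSet :
    betaSet r '' {lam | IsRectPartition r s lam} = ↑((range (r + s)).powersetCard r) := by
  ext B
  simp only [Set.mem_image, Set.mem_ofPred_eq, mem_coe, mem_powersetCard]
  constructor
  · rintro ⟨lam, hlam, rfl⟩
    exact ⟨betaSet_subset_range hlam.2, card_betaSet hlam.1⟩
  · rintro ⟨hB, hcard⟩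
    exact exists_isRectPartition_betaSet_eq hB hcard

lemma finsum_isRectPartition_betaSet {M : Type*} [AddCommMonoid M] (P : Finset ℕ → Prop)
    [DecidablePred P] (f : Finset ℕ → M) :
    ∑ᶠ lam ∈ {lam | IsRectPartition r s lam ∧ P (betaSet r lam)}, f (betaSet r lam) =
      ∑ B ∈ (range (r + s)).powersetCard r with P B, f B := by
  have hinj : Set.InjOn (betaSet r) {lam | IsRectPartition r s lam ∧ P (betaSet r lam)} :=
    betaSet_injOn.mono fun lam h => h.1.1
  have himage : betaSet r '' {lam | IsRectPartition r s lam ∧ P (betaSet r lam)} =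
      ↑({B ∈ (range (r + s)).powersetCard r | P B}) := by
    rw [show {lam | IsRectPartition r s lam ∧ P (betaSet r lam)} =
        {lam | IsRectPartition r s lam} ∩ betaSet r ⁻¹' {B | P B} from rfl,
      Set.image_inter_preimage, image_betaSet, coe_filter]
    rfl
  rw [← finsum_mem_image hinj, himage, finsum_mem_coe_finset]

end BetaSet

section Justified

variable {t : ℕ}

def residueCounts (t : ℕ) (B : Finset ℕ) : Fin t → ℕ := fun i => #{b ∈ B | b % t = i}

def justifiedSet (t : ℕ) (a : Fin t → ℕ) : Finset ℕ :=
  univ.biUnion fun i => (range (a i)).image fun m => i + m * t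

/-- `IsTCore r t lam` unfolds to `ShiftClosed t (betaSet r lam)`. -/
def ShiftClosed (t : ℕ) (B : Finset ℕ) : Prop := ∀ b ∈ B, t ≤ b → b - t ∈ B

instance : DecidablePred (ShiftClosed t) := fun B =>
  inferInstanceAs (Decidable (∀ b ∈ B, t ≤ b → b - t ∈ B))

lemma justification_eq (r t : ℕ) (lam : Fin r → ℕ) :
    justification r t lam = justifiedSet t (residueCounts t (betaSet r lam)) := by
  ext b
  simp only [justification, justifiedSet, residueCounts, aCount, mem_biUnion, mem_range,
    mem_univ, true_and, Fin.exists_iff, exists_prop]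

lemma mem_justifiedSet {a : Fin t → ℕ} {b : ℕ} :
    b ∈ justifiedSet t a ↔ ∃ i : Fin t, ∃ m < a i, i + m * t = b := by
  simp only [justifiedSet, mem_biUnion, mem_univ, true_and, mem_image, mem_range]

lemma Fin.val_add_mul_mod (i : Fin t) (m : ℕ) : ((i : ℕ) + m * t) % t = i := by
  rw [Nat.add_mul_mod_self_right, Nat.mod_eq_of_lt i.isLt]

lemma card_eq_sum_residueCounts (ht : 0 < t) (B : Finset ℕ) :
    #B = ∑ i, residueCounts t B i := by
  rw [card_eq_sum_card_fiberwise (f := (· % t)) (t := range t)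
    fun b _ => mem_coe.2 (mem_range.2 (Nat.mod_lt b ht))]
  exact (Fin.sum_univ_eq_sum_range (fun i => #{b ∈ B | b % t = i}) t).symm

lemma residueCounts_justifiedSet (ht : 0 < t) (a : Fin t → ℕ) :
    residueCounts t (justifiedSet t a) = a := by
  funext i
  have hclass : {b ∈ justifiedSet t a | b % t = i} = (range (a i)).image (i + · * t) := by
    ext b
    simp only [mem_filter, mem_justifiedSet, mem_image, mem_range]
    constructor
    · rintro ⟨⟨j, m, hm, rfl⟩, hj⟩
      obtain rfl : j = i := Fin.ext (by rwa [Fin.val_add_mul_mod] at hj)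
      exact ⟨m, hm, rfl⟩
    · rintro ⟨m, hm, rfl⟩
      exact ⟨⟨i, m, hm, rfl⟩, Fin.val_add_mul_mod i m⟩
  rw [residueCounts, hclass, card_image_of_injective _
    fun m m' h => Nat.eq_of_mul_eq_mul_right ht (Nat.add_left_cancel h), card_range]

lemma card_justifiedSet (ht : 0 < t) (a : Fin t → ℕ) : #(justifiedSet t a) = ∑ i, a i := by
  rw [card_eq_sum_residueCounts ht, residueCounts_justifiedSet ht]

lemma justifiedSet_subset_range {a : Fin t → ℕ} {n : ℕ} (ha : ∀ i, a i ≤ n) :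
    justifiedSet t a ⊆ range (n * t) := by
  intro b hb
  obtain ⟨i, m, hm, rfl⟩ := mem_justifiedSet.1 hb
  have hmt : (m + 1) * t ≤ n * t := Nat.mul_le_mul_right t (hm.trans_le (ha i))
  have := i.isLt
  rw [Nat.succ_mul] at hmt
  rw [mem_range]
  omega

lemma shiftClosed_justifiedSet (a : Fin t → ℕ) : ShiftClosed t (justifiedSet t a) := by
  intro b hb hbt
  obtain ⟨i, m, hm, rfl⟩ := mem_justifiedSet.1 hb
  have := i.isLt
  cases m with
  | zero => omega
  | succ m => exact mem_justifiedSet.2 ⟨i, m, by omega, by rw [Nat.succ_mul]; omega⟩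

lemma ShiftClosed.sub_mul_mem {B : Finset ℕ} (hB : ShiftClosed t B) {b : ℕ} (hb : b ∈ B)
    (k : ℕ) (hk : k * t ≤ b) : b - k * t ∈ B := by
  induction k with
  | zero => simpa using hb
  | succ k ih =>
    rw [Nat.succ_mul] at hk ⊢
    rw [← Nat.sub_sub]
    exact hB _ (ih (by omega)) (by omega)

lemma ShiftClosed.subset_justifiedSet (ht : 0 < t) {B : Finset ℕ} (hB : ShiftClosed t B) :
    B ⊆ justifiedSet t (residueCounts t B) := by
  intro b hb
  refine mem_justifiedSet.2 ⟨⟨b % t, Nat.mod_lt b ht⟩, b / t, ?_, Nat.mod_add_div' b t⟩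
  have hdiv := Nat.mod_add_div' b t
  have hlower : (range (b / t + 1)).image (b % t + · * t) ⊆ {x ∈ B | x % t = b % t} := by
    intro x hx
    obtain ⟨k, hk, rfl⟩ := mem_image.1 hx
    have hk : k ≤ b / t := Nat.lt_succ_iff.1 (mem_range.1 hk)
    have hsub : b % t + k * t = b - (b / t - k) * t := by
      rw [Nat.sub_mul]
      have := Nat.mul_le_mul_right t hk
      omega
    refine mem_filter.2 ⟨?_, by rw [Nat.add_mul_mod_self_right, Nat.mod_mod]⟩
    rw [hsub]
    exact hB.sub_mul_mem hb _ (by rw [Nat.sub_mul]; omega)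
  have := card_le_card hlower
  rw [card_image_of_injective _ fun m m' h => Nat.eq_of_mul_eq_mul_right ht
    (Nat.add_left_cancel h), card_range] at this
  exact this

lemma ShiftClosed.justifiedSet_residueCounts (ht : 0 < t) {B : Finset ℕ}
    (hB : ShiftClosed t B) : justifiedSet t (residueCounts t B) = B :=
  (eq_of_subset_of_card_le (hB.subset_justifiedSet ht)
    (by rw [card_justifiedSet ht, ← card_eq_sum_residueCounts ht])).symm

end Justified

section Fibers

variable {α ι : Type*} [DecidableEq α] [Fintype ι] [DecidableEq ι]

lemma filter_biUnion_eq_of_forall_mem {c : α → ι} {p : ι → Finset α}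
    (hp : ∀ j, ∀ x ∈ p j, c x = j) (i : ι) : {x ∈ univ.biUnion p | c x = i} = p i := by
  ext x
  simp only [mem_filter, mem_biUnion, mem_univ, true_and]
  constructor
  · rintro ⟨⟨j, hx⟩, rfl⟩
    rwa [← hp j x hx] at hx
  · exact fun hx => ⟨⟨i, hx⟩, hp i x hx⟩

lemma card_filter_powerset_fiber_card_eq (S : Finset α) (c : α → ι) (a : ι → ℕ) :
    #{B ∈ S.powerset | ∀ i, #{x ∈ B | c x = i} = a i} =
      ∏ i, (#{x ∈ S | c x = i}).choose (a i) := by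
  simp_rw [← card_powersetCard, ← Fintype.card_piFinset]
  refine card_nbij' (fun B i => {x ∈ B | c x = i}) (fun p => univ.biUnion p)
    (fun B hB => ?_) (fun p hp => ?_) (fun B hB => ?_) (fun p hp => ?_)
  all_goals simp only [mem_coe, mem_filter, mem_powerset, Fintype.mem_piFinset,
    mem_powersetCard] at *
  · exact fun i => ⟨filter_subset_filter _ hB.1, hB.2 i⟩
  · have hc : ∀ j, ∀ x ∈ p j, c x = j := fun j x hx => (mem_filter.1 ((hp j).1 hx)).2
    refine ⟨fun x hx => ?_, fun i => by rw [filter_biUnion_eq_of_forall_mem hc, (hp i).2]⟩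
    obtain ⟨j, -, hx⟩ := mem_biUnion.1 hx
    exact (mem_filter.1 ((hp j).1 hx)).1
  · ext x
    simp
  · exact funext (filter_biUnion_eq_of_forall_mem fun j x hx => (mem_filter.1 ((hp j).1 hx)).2)

end Fibers

section Counting

variable {t : ℕ}

lemma sum_powersetCard_residueCounts {M : Type*} [AddCommMonoid M] (ht : 0 < t) (N r : ℕ)
    (f : (Fin t → ℕ) → M) :
    ∑ B ∈ (range N).powersetCard r, f (residueCounts t B) =
      ∑ a ∈ Nat.antidiagonalTuple t r,
        (∏ i : Fin t, (#{b ∈ range N | b % t = i}).choose (a i)) • f a := by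
  rw [← sum_fiberwise_of_maps_to (g := residueCounts t) (t := Nat.antidiagonalTuple t r)
    fun B hB => Nat.mem_antidiagonalTuple.2 (by
      rw [← card_eq_sum_residueCounts ht, (mem_powersetCard.1 hB).2])]
  refine sum_congr rfl fun a ha => ?_
  rw [sum_congr rfl fun B hB => congrArg f (mem_filter.1 hB).2, sum_const]
  congr 1
  have : NeZero t := ⟨ht.ne'⟩
  have hres (B : Finset ℕ) (i : Fin t) :
      ({x ∈ B | Fin.ofNat t x = i} : Finset ℕ) = {x ∈ B | x % t = i} :=
    filter_congr fun x _ => by rw [Fin.ext_iff, Fin.val_ofNat]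
  have := card_filter_powerset_fiber_card_eq (range N) (Fin.ofNat t) a
  simp only [hres] at this
  rw [← this]
  congr 1
  ext B
  simp only [mem_filter, mem_powersetCard, mem_powerset, funext_iff, residueCounts]
  refine ⟨fun h => ⟨h.1.1, h.2⟩, fun h => ⟨⟨h.1, ?_⟩, h.2⟩⟩
  rw [card_eq_sum_residueCounts ht, ← Nat.mem_antidiagonalTuple.1 ha]
  exact sum_congr rfl fun i _ => h.2 i

lemma sum_shiftClosed_powersetCard {M : Type*} [AddCommMonoid M] (ht : 0 < t) (r : ℕ)
    (f : (Fin t → ℕ) → M) :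
    ∑ B ∈ (range (r + r * t)).powersetCard r with ShiftClosed t B, f (residueCounts t B) =
      ∑ a ∈ Nat.antidiagonalTuple t r, f a := by
  refine sum_nbij' (residueCounts t) (justifiedSet t) (fun B hB => ?_) (fun a ha => ?_)
    (fun B hB => (mem_filter.1 hB).2.justifiedSet_residueCounts ht)
    (fun a _ => residueCounts_justifiedSet ht a) (fun _ _ => rfl)
  · rw [mem_filter, mem_powersetCard] at hB
    rw [Nat.mem_antidiagonalTuple, ← card_eq_sum_residueCounts ht, hB.1.2]
  · rw [Nat.mem_antidiagonalTuple] at ha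
    refine mem_filter.2 ⟨mem_powersetCard.2 ⟨?_, by rw [card_justifiedSet ht, ha]⟩,
      shiftClosed_justifiedSet a⟩
    refine (justifiedSet_subset_range fun i => ?_).trans
      (range_subset_range.2 (Nat.le_add_left _ _))
    rw [← ha]
    exact single_le_sum (fun j _ => Nat.zero_le (a j)) (mem_univ i)

end Counting

section CoreSize

variable {r t : ℕ}

def coreSizeOfCounts (r t : ℕ) (a : Fin t → ℕ) : ℕ :=
  (∑ b ∈ justifiedSet t a, b) - r * (r - 1) / 2

lemma coreSize_eq_coreSizeOfCounts (lam : Fin r → ℕ) :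
    coreSize r t lam = coreSizeOfCounts r t (residueCounts t (betaSet r lam)) := by
  rw [coreSize, justification_eq, coreSizeOfCounts]

lemma IsTCore.coreSize_eq (ht : 0 < t) {lam : Fin r → ℕ} (hlam : Antitone lam)
    (hcore : IsTCore r t lam) : coreSize r t lam = ∑ i, lam i := by
  rw [coreSize, justification_eq, ShiftClosed.justifiedSet_residueCounts ht hcore,
    sum_betaSet hlam, Nat.add_sub_cancel]

lemma finsum_pow_coreSize (ht : 0 < t) (s : ℕ) (z : ℂ) :
    ∑ᶠ lam ∈ {lam | IsRectPartition r s lam}, z ^ coreSize r t lam =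
      ∑ a ∈ Nat.antidiagonalTuple t r,
        (∏ i : Fin t, ((#{b ∈ range (r + s) | b % t = i}).choose (a i) : ℂ)) *
          z ^ coreSizeOfCounts r t a := by
  have := finsum_isRectPartition_betaSet (r := r) (s := s) (fun _ => True)
    fun B => z ^ coreSizeOfCounts r t (residueCounts t B)
  simp only [and_true, filter_true] at this
  simp only [coreSize_eq_coreSizeOfCounts, this]
  rw [sum_powersetCard_residueCounts ht _ _ fun a => z ^ coreSizeOfCounts r t a]
  simp only [nsmul_eq_mul, Nat.cast_prod]

lemma finsum_tCore (ht : 0 < t) (z : ℂ) :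
    ∑ᶠ ρ ∈ {ρ : Fin r → ℕ | IsRectPartition r (r * t) ρ ∧ IsTCore r t ρ},
        z ^ (∑ i, ρ i) * ((1 / (t : ℂ) ^ r) *
          ((r.factorial : ℂ) / ∏ i ∈ range t, ((aCount r t ρ i).factorial : ℂ))) =
      ∑ a ∈ Nat.antidiagonalTuple t r, z ^ coreSizeOfCounts r t a * ((1 / (t : ℂ) ^ r) *
          ((r.factorial : ℂ) / ∏ i : Fin t, ((a i).factorial : ℂ))) := by
  rw [← sum_shiftClosed_powersetCard ht r, ← finsum_isRectPartition_betaSet]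
  refine finsum_mem_congr rfl fun ρ hρ => ?_
  rw [← IsTCore.coreSize_eq ht hρ.1.1 hρ.2, coreSize_eq_coreSizeOfCounts,
    ← Fin.prod_univ_eq_prod_range]
  rfl

end CoreSize

section Asymptotics

lemma tendsto_natCast_div_self : Tendsto (fun s : ℕ => (s : ℝ) / s) atTop (𝓝 1) := by
  simpa using tendsto_natCast_div_add_atTop (0 : ℝ)

lemma tendsto_div_natCast_of_abs_sub_le {u v : ℕ → ℝ} {L B : ℝ}
    (hu : Tendsto (fun s => u s / s) atTop (𝓝 L)) (huv : ∀ s, |v s - u s| ≤ B) :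
    Tendsto (fun s => v s / s) atTop (𝓝 L) := by
  have hsmall : Tendsto (fun s : ℕ => (v s - u s) / s) atTop (𝓝 0) := by
    refine squeeze_zero_norm (fun s => ?_) (tendsto_const_div_atTop_nhds_zero_nat B)
    rw [norm_div, Real.norm_eq_abs, Real.norm_natCast]
    exact div_le_div_of_nonneg_right (huv s) (Nat.cast_nonneg s)
  simpa [sub_div] using hu.add hsmall

lemma tendsto_choose_div_pow {u : ℕ → ℕ} {L : ℝ}
    (hu : Tendsto (fun s => (u s : ℝ) / s) atTop (𝓝 L)) (k : ℕ) :
    Tendsto (fun s => ((u s).choose k : ℝ) / (s : ℝ) ^ k) atTop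
      (𝓝 (L ^ k / k.factorial)) := by
  have hfactor (j : ℕ) : Tendsto (fun s => ((u s - j : ℕ) : ℝ) / s) atTop (𝓝 L) := by
    refine tendsto_div_natCast_of_abs_sub_le (B := j) hu fun s => abs_le.2 ⟨?_, ?_⟩
    · have : (u s : ℝ) ≤ (u s - j : ℕ) + j := by exact_mod_cast le_tsub_add
      linarith
    · have : ((u s - j : ℕ) : ℝ) ≤ u s := by exact_mod_cast Nat.sub_le _ _
      linarith
  have := (tendsto_finsetProd (range k) fun j _ => hfactor j).div_const (k.factorial : ℝ)
  rw [prod_const, card_range] at this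
  refine this.congr fun s => ?_
  rw [prod_div_distrib, prod_const, card_range, ← Nat.cast_prod,
    ← Nat.descFactorial_eq_prod_range, Nat.descFactorial_eq_factorial_mul_choose, Nat.cast_mul]
  field_simp

lemma card_filter_range_mod_bounds {t : ℕ} (ht : 0 < t) (N : ℕ) (i : Fin t) :
    N < t * #{b ∈ range N | b % t = i} + t ∧ t * #{b ∈ range N | b % t = i} ≤ N + t := by
  have hcount := Nat.count_modEq_card (b := N) ht i
  rw [Nat.count_eq_card_filter_range, Nat.mod_eq_of_lt i.isLt] at hcount
  have hfilter : ({b ∈ range N | b ≡ i [MOD t]} : Finset ℕ) = {b ∈ range N | b % t = i} :=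
    filter_congr fun b _ => by rw [Nat.ModEq, Nat.mod_eq_of_lt i.isLt]
  rw [← hfilter, hcount]
  have := Nat.div_add_mod N t
  have := Nat.mod_lt N ht
  split_ifs <;> simp only [Nat.mul_add, mul_one, add_zero] <;> constructor <;>
    linarith [Nat.zero_le (N % t)]

lemma tendsto_card_filter_range_mod_div {t : ℕ} (ht : 0 < t) (r : ℕ) (i : Fin t) :
    Tendsto (fun s => (#{b ∈ range (r + s) | b % t = i} : ℝ) / s) atTop (𝓝 (1 / t)) := by
  have hmul :
      Tendsto (fun s => (t * #{b ∈ range (r + s) | b % t = i} : ℝ) / s) atTop (𝓝 1) := by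
    refine tendsto_div_natCast_of_abs_sub_le tendsto_natCast_div_self (B := r + t)
      fun s => abs_le.2 ?_
    obtain ⟨hlow, hup⟩ := card_filter_range_mod_bounds ht (r + s) i
    have hlow : ((r + s : ℕ) : ℝ) < (t * #{b ∈ range (r + s) | b % t = i} + t : ℕ) := by
      exact_mod_cast hlow
    have hup : ((t * #{b ∈ range (r + s) | b % t = i} : ℕ) : ℝ) ≤ (r + s + t : ℕ) := by
      exact_mod_cast hup
    push_cast at hlow hup
    constructor <;> linarith
  have ht' : (t : ℝ) ≠ 0 := Nat.cast_ne_zero.2 ht.ne'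
  refine (hmul.div_const (t : ℝ)).congr fun s => ?_
  field_simp

lemma tendsto_prod_choose_div_choose {r t : ℕ} (ht : 0 < t) {a : Fin t → ℕ}
    (ha : ∑ i, a i = r) :
    Tendsto (fun s => (∏ i : Fin t, ((#{b ∈ range (r + s) | b % t = i}).choose (a i) : ℝ)) /
        ((r + s).choose r : ℝ)) atTop
      (𝓝 ((1 / (t : ℝ) ^ r) * ((r.factorial : ℝ) / ∏ i, ((a i).factorial : ℝ)))) := by
  have hnum := tendsto_finsetProd univ fun i _ =>
    tendsto_choose_div_pow (tendsto_card_filter_range_mod_div ht r i) (a i)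
  have hden := tendsto_choose_div_pow (u := fun s => r + s) (L := 1)
    (tendsto_div_natCast_of_abs_sub_le (B := r) tendsto_natCast_div_self fun s => by simp) r
  have hlim := hnum.div hden (by positivity)
  have hvalue : (∏ i, (1 / (t : ℝ)) ^ a i / (a i).factorial) / (1 ^ r / r.factorial) =
      1 / (t : ℝ) ^ r * (r.factorial / ∏ i, ((a i).factorial : ℝ)) := by
    rw [prod_div_distrib, prod_pow_eq_pow_sum, ha, one_pow, one_div_pow]
    field_simp
  rw [← hvalue]
  refine hlim.congr' ((eventually_ne_atTop 0).mono fun s hs => ?_)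
  rw [Pi.div_apply, prod_div_distrib, prod_pow_eq_pow_sum, ha,
    div_div_div_cancel_right₀ (pow_ne_zero _ (Nat.cast_ne_zero.2 hs))]

end Asymptotics

theorem pgf_core_size_limit_general (r t : ℕ) (ht : 2 ≤ t) (z : ℂ) :
    Filter.Tendsto
      (fun s : ℕ => (1 / ((r + s).choose r : ℂ)) *
        ∑ᶠ lam ∈ {lam : Fin r → ℕ | IsRectPartition r s lam}, z ^ coreSize r t lam)
      Filter.atTop
      (nhds (∑ᶠ ρ ∈ {ρ : Fin r → ℕ | IsRectPartition r (r * t) ρ ∧ IsTCore r t ρ},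
        z ^ (∑ i, ρ i) * ((1 / (t : ℂ) ^ r) *
          ((r.factorial : ℂ) / ∏ i ∈ Finset.range t, ((aCount r t ρ i).factorial : ℂ))))) := by
  have ht0 : 0 < t := by omega
  simp only [finsum_pow_coreSize ht0, finsum_tCore ht0, mul_sum]
  refine tendsto_finsetSum _ fun a ha => ?_
  have hratio := (tendsto_prod_choose_div_choose ht0 (Nat.mem_antidiagonalTuple.1 ha)).ofReal
  push_cast at hratio
  convert hratio.mul_const (z ^ coreSizeOfCounts r t a) using 2 <;> ring

/-- For every `z : ℂ`, the probability generating function of the size of the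
`t`-core of a uniformly random partition in `Par_{r,s}` converges, as `s → ∞`, to
`Σ_ρ z^{|ρ|} (1/t^r) r!/(a_0(ρ)! ⋯ a_{t−1}(ρ)!)`, the sum running over all `t`-cores
`ρ ∈ Par_{r,rt}`. -/
theorem pgf_core_size_limit (r t : ℕ) (hr : 1 ≤ r) (ht : 2 ≤ t) (z : ℂ) :
    Filter.Tendsto
      (fun s : ℕ => (1 / ((r + s).choose r : ℂ)) *
        ∑ᶠ lam ∈ {lam : Fin r → ℕ | IsRectPartition r s lam}, z ^ coreSize r t lam)
      Filter.atTop
      (nhds (∑ᶠ ρ ∈ {ρ : Fin r → ℕ | IsRectPartition r (r * t) ρ ∧ IsTCore r t ρ},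
        z ^ (∑ i, ρ i) * ((1 / (t : ℂ) ^ r) *
          ((r.factorial : ℂ) / ∏ i ∈ Finset.range t, ((aCount r t ρ i).factorial : ℂ))))) :=
  pgf_core_size_limit_general r t ht z
end

section
/- Fix an integer t ≥ 2 and a real number κ > 0. Let (r_k) and (s_k) be sequences of positive integers with r_k → ∞, s_k → ∞, and s_k/r_k → κ. Then lim_{k→∞} (t/r_k) · (1/C(r_k+s_k, r_k)) · Σ_{λ ∈ Par_{r_k,s_k}} |core_t(λ)| = C(t,2) · κ/(1+κ), i.e., the expectation of t·|core_t(λ)|/r_k for a uniformly random λ ∈ Par_{r_k,s_k} converges to (t(t−1)/2) · κ/(1+κ). -/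
/-!
The beta-set map is a bijection from `Par_{r,s}` onto the `r`-subsets `B` of `{0, …, r+s-1}`,
and the sum of the justification depends only on the residue counts `a_i` of `B`: it is
`∑ i, (i a_i + t C(a_i, 2))`. Double counting gives `∑_B C(a_i, j) = C(n_i, j) C(r+s-j, r-j)`,
where `n_i` is the size of the residue class of `i` in `{0, …, r+s-1}`. That set is its own
justification, so `C(r+s, 2) = ∑ i, (i n_i + t C(n_i, 2))`, and the quadratic terms cancel
against `C(r, 2)`: the total core size over `Par_{r,s}` is exactly `(∑ i, i n_i) C(r+s-2, r-1)`.
Hence the expectation of `t |core_t(λ)| / r` is `(t ∑ i, i n_i / (r+s)) · s / (r+s-1)`, and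
`t n_i ≈ r + s` gives the limit `C(t, 2) κ / (1 + κ)`.
-/

open Finset

namespace Finset

theorem choose_two_le_sum (J : Finset ℕ) : (#J).choose 2 ≤ ∑ b ∈ J, b := by
  induction J using Finset.induction_on_max with
  | empty => simp
  | insert a J hlt ih =>
    have ha : a ∉ J := fun h => (hlt a h).false
    have hJa : #J ≤ a := by simpa using card_le_card (fun x hx => mem_range.2 (hlt x hx))
    rw [card_insert_of_notMem ha, sum_insert ha]
    simp only [Nat.choose_two_right] at ih ⊢
    rw [Nat.triangle_succ]
    omega

theorem sum_powersetCard_choose_card_filter {α : Type*} [DecidableEq α] (u : Finset α)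
    (p : α → Prop) [DecidablePred p] {j k : ℕ} (hjk : j ≤ k) :
    ∑ B ∈ u.powersetCard k, (#(B.filter p)).choose j
      = (#(u.filter p)).choose j * (#u - j).choose (k - j) := by
  have hsub : ∀ B ∈ u.powersetCard k, (#(B.filter p)).choose j
      = #(((u.filter p).powersetCard j).bipartiteAbove (fun B P => P ⊆ B) B) := by
    intro B hB
    rw [← card_powersetCard]
    congr 1
    ext P
    simp only [bipartiteAbove, mem_powersetCard, mem_filter, subset_iff]
    constructor
    · rintro ⟨hP, rfl⟩
      exact ⟨⟨fun x hx => ⟨(mem_powersetCard.1 hB).1 (hP hx).1, (hP hx).2⟩, rfl⟩,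
        fun x hx => (hP hx).1⟩
    · rintro ⟨⟨hP, rfl⟩, hPB⟩
      exact ⟨fun x hx => ⟨hPB hx, (hP hx).2⟩, rfl⟩
  rw [sum_congr rfl hsub, sum_card_bipartiteAbove_eq_sum_card_bipartiteBelow,
    sum_congr rfl fun P hP => ?_, sum_const, card_powersetCard, smul_eq_mul]
  obtain ⟨hPu, hPj⟩ := mem_powersetCard.1 hP
  rw [bipartiteBelow, ← hPj]
  exact card_filter_powersetCard_subset P u k (hPu.trans (filter_subset p u)) (hPj ▸ hjk)

end Finset

theorem Nat.add_choose_mul_mul (r s : ℕ) (hr : 1 ≤ r) :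
    (r + s).choose r * r * s = (r + s) * (r + s - 1) * (r + s - 2).choose (r - 1) := by
  obtain ⟨a, rfl⟩ := Nat.exists_eq_add_of_le' hr
  rcases s with _ | b
  · cases a <;> simp
  have h₁ := Nat.add_one_mul_choose_eq (a + b + 1) a
  have h₂ := Nat.choose_mul_succ_eq (a + b) a
  rw [show a + 1 + (b + 1) = a + b + 1 + 1 by ring, show a + b + 1 + 1 - 1 = a + b + 1 by omega,
    show a + b + 1 + 1 - 2 = a + b by omega, show a + 1 - 1 = a by omega]
  rw [show a + b + 1 - a = b + 1 by omega] at h₂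
  calc (a + b + 1 + 1).choose (a + 1) * (a + 1) * (b + 1)
      = (a + b + 1 + 1) * (a + b + 1).choose a * (b + 1) := by rw [h₁]
    _ = (a + b + 1 + 1) * (a + b + 1) * (a + b).choose a := by rw [mul_assoc, ← h₂]; ring

/-- The justification of any finite set of naturals; `justification r t lam` unfolds to
`justify t (betaSet r lam)`. -/
def justify (t : ℕ) (B : Finset ℕ) : Finset ℕ :=
  (range t).biUnion fun i => (range #(B.filter (· % t = i))).image (i + · * t)

section Justify

variable {t : ℕ}

theorem add_mul_injective (ht : 0 < t) (i : ℕ) : Function.Injective (i + · * t) :=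
  fun _ _ h => Nat.eq_of_mul_eq_mul_right ht (Nat.add_left_cancel h)

theorem pairwiseDisjoint_image_add_mul (f : ℕ → ℕ) :
    (range t : Set ℕ).PairwiseDisjoint fun i => (range (f i)).image (i + · * t) := by
  intro i hi j hj hij
  simp only [Function.onFun, disjoint_left, mem_image]
  rintro _ ⟨m, -, rfl⟩ ⟨m', -, h⟩
  have := congrArg (· % t) h
  simp only [Nat.add_mul_mod_self_right, Nat.mod_eq_of_lt (mem_range.1 hi),
    Nat.mod_eq_of_lt (mem_range.1 hj)] at this
  exact hij this.symm

theorem sum_range_add_mul (i a : ℕ) :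
    ∑ m ∈ range a, (i + m * t) = i * a + t * a.choose 2 := by
  rw [sum_add_distrib, sum_const, card_range, smul_eq_mul, ← sum_mul, sum_range_id,
    Nat.choose_two_right]
  ring

theorem sum_justify (ht : 0 < t) (B : Finset ℕ) :
    ∑ b ∈ justify t B, b = ∑ i ∈ range t, (i * #(B.filter (· % t = i))
      + t * (#(B.filter (· % t = i))).choose 2) := by
  rw [justify, sum_biUnion (pairwiseDisjoint_image_add_mul _)]
  refine sum_congr rfl fun i _ => ?_
  rw [sum_image fun _ _ _ _ h => add_mul_injective ht i h, sum_range_add_mul]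

theorem card_justify (ht : 0 < t) (B : Finset ℕ) : #(justify t B) = #B := by
  rw [justify, card_biUnion (pairwiseDisjoint_image_add_mul _),
    card_eq_sum_card_fiberwise fun b _ => mem_range.2 (Nat.mod_lt b ht)]
  exact sum_congr rfl fun i _ => by
    rw [card_image_of_injective _ (add_mul_injective ht i), card_range]

theorem lt_div_iff_add_mul_lt (ht : 0 < t) {N i : ℕ} (hi : i < t) (m : ℕ) :
    m < (N + t - 1 - i) / t ↔ i + m * t < N := by
  rw [← Nat.add_one_le_iff, Nat.le_div_iff_mul_le ht, add_mul, one_mul]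
  omega

theorem filter_range_mod_eq_image (ht : 0 < t) (N : ℕ) {i : ℕ} (hi : i < t) :
    (range N).filter (· % t = i) = (range ((N + t - 1 - i) / t)).image (i + · * t) := by
  ext b
  simp only [mem_filter, mem_range, mem_image, lt_div_iff_add_mul_lt ht hi]
  constructor
  · rintro ⟨hb, rfl⟩
    exact ⟨b / t, by rwa [Nat.mod_add_div'], Nat.mod_add_div' b t⟩
  · rintro ⟨m, hm, rfl⟩
    exact ⟨hm, by rw [Nat.add_mul_mod_self_right, Nat.mod_eq_of_lt hi]⟩

theorem card_filter_range_mod (ht : 0 < t) (N : ℕ) {i : ℕ} (hi : i < t) :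
    #((range N).filter (· % t = i)) = (N + t - 1 - i) / t := by
  rw [filter_range_mod_eq_image ht N hi, card_image_of_injective _ (add_mul_injective ht i),
    card_range]

theorem justify_range (ht : 0 < t) (N : ℕ) : justify t (range N) = range N := by
  conv_rhs => rw [← biUnion_filter_eq_of_maps_to (s := range N) (t := range t)
    fun b _ => mem_range.2 (Nat.mod_lt b ht)]
  refine biUnion_congr rfl fun i hi => ?_
  rw [card_filter_range_mod ht N (mem_range.1 hi), filter_range_mod_eq_image ht N (mem_range.1 hi)]

end Justify

theorem Fin.apply_add_sub_le_of_strictMono {n : ℕ} {f : Fin n → ℕ} (hf : StrictMono f)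
    {i j : Fin n} (hij : i ≤ j) : f i + (j - i) ≤ f j := by
  have hsub : (Icc i j).image f ⊆ Icc (f i) (f j) := fun _ hy => by
    obtain ⟨x, hx, rfl⟩ := mem_image.1 hy
    exact mem_Icc.2 ⟨hf.monotone (mem_Icc.1 hx).1, hf.monotone (mem_Icc.1 hx).2⟩
  have := card_le_card hsub
  rw [card_image_of_injective _ hf.injective, Fin.card_Icc, Nat.card_Icc] at this
  have : (i : ℕ) ≤ j := hij
  omega

def betaSeq (r : ℕ) (lam : Fin r → ℕ) (j : Fin r) : ℕ := lam j.rev + j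

theorem betaSet_eq_image_betaSeq (r : ℕ) (lam : Fin r → ℕ) :
    betaSet r lam = univ.image (betaSeq r lam) := by
  have : (fun i : Fin r => lam i + (r - 1 - i)) = betaSeq r lam ∘ Fin.rev := by
    funext i
    simp only [Function.comp, betaSeq, Fin.rev_rev, Fin.val_rev]
    omega
  rw [betaSet, this, ← image_image, image_univ_of_surjective Fin.rev_surjective]

theorem strictMono_betaSeq {r : ℕ} {lam : Fin r → ℕ} (hlam : Antitone lam) :
    StrictMono (betaSeq r lam) := fun j j' hjj' => by
  have := hlam (Fin.rev_le_rev.2 hjj'.le)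
  have : (j : ℕ) < j' := hjj'
  simp only [betaSeq]
  omega

theorem betaSet_mem_powersetCard {r s : ℕ} {lam : Fin r → ℕ}
    (hlam : IsRectPartition r s lam) :
    betaSet r lam ∈ (range (r + s)).powersetCard r := by
  rw [mem_powersetCard, betaSet_eq_image_betaSeq,
    card_image_of_injective _ (strictMono_betaSeq hlam.1).injective, card_univ, Fintype.card_fin]
  refine ⟨fun b hb => ?_, rfl⟩
  obtain ⟨j, -, rfl⟩ := mem_image.1 hb
  have := hlam.2 j.rev
  have := j.isLt
  simp only [betaSeq, mem_range]
  omega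

theorem betaSet_bijOn (r s : ℕ) :
    Set.BijOn (betaSet r) {lam | IsRectPartition r s lam} ((range (r + s)).powersetCard r) := by
  refine ⟨fun lam hlam => betaSet_mem_powersetCard hlam, fun lam hlam lam' hlam' h => ?_,
    fun B hB => ?_⟩
  · rw [betaSet_eq_image_betaSeq, betaSet_eq_image_betaSeq] at h
    have h := congrArg ((↑) : Finset ℕ → Set ℕ) h
    simp only [coe_image, coe_univ, Set.image_univ] at h
    have h := (StrictMono.range_inj (strictMono_betaSeq hlam.1) (strictMono_betaSeq hlam'.1)).1 h
    funext i
    have := congrFun h i.rev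
    simp only [betaSeq, Fin.rev_rev] at this
    omega
  · obtain ⟨hBsub, hBcard⟩ := mem_powersetCard.1 hB
    set e := B.orderEmbOfFin hBcard
    have hge (j : Fin r) : (j : ℕ) ≤ e j := by
      have := Fin.apply_add_sub_le_of_strictMono e.strictMono (i := ⟨0, j.pos⟩) (Nat.zero_le j)
      dsimp only at this
      omega
    have hle (j : Fin r) : e j ≤ j + s := by
      have := j.pos
      have hlast := Fin.apply_add_sub_le_of_strictMono e.strictMono
        (j := ⟨r - 1, by omega⟩) (Nat.le_sub_one_of_lt j.isLt)
      have hmem : e ⟨r - 1, by omega⟩ ∈ B := B.orderEmbOfFin_mem hBcard _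
      have := mem_range.1 (hBsub hmem)
      dsimp only at hlast
      omega
    refine ⟨fun i => e i.rev - i.rev, ⟨fun i i' hii' => ?_, fun i => ?_⟩, ?_⟩
    · have := Fin.apply_add_sub_le_of_strictMono e.strictMono (Fin.rev_le_rev.2 hii')
      dsimp only
      omega
    · have := hle i.rev
      dsimp only
      omega
    · rw [betaSet_eq_image_betaSeq, ← image_orderEmbOfFin_univ B hBcard]
      congr 1
      funext j
      simp only [betaSeq, Fin.rev_rev]
      exact Nat.sub_add_cancel (hge j)

section Counting

variable {r s t : ℕ}

theorem choose_two_eq_sum_nres (ht : 0 < t) :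
    (r + s).choose 2 = ∑ i ∈ range t, (i * nres r s t i + t * (nres r s t i).choose 2) := by
  rw [Nat.choose_two_right, ← sum_range_id, ← justify_range ht, sum_justify ht]
  refine sum_congr rfl fun i hi => ?_
  rw [card_filter_range_mod ht _ (mem_range.1 hi), nres]

theorem sum_powersetCard_sum_justify (ht : 0 < t) (hr : 2 ≤ r) :
    ∑ B ∈ (range (r + s)).powersetCard r, ∑ b ∈ justify t B, b
      = (∑ i ∈ range t, i * nres r s t i) * (r + s - 1).choose (r - 1)
        + t * (∑ i ∈ range t, (nres r s t i).choose 2) * (r + s - 2).choose (r - 2) := by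
  have hcount (j : ℕ) (hj : j ≤ r) (i : ℕ) (hi : i ∈ range t) :
      ∑ B ∈ (range (r + s)).powersetCard r, (#(B.filter (· % t = i))).choose j
        = (nres r s t i).choose j * (r + s - j).choose (r - j) := by
    rw [sum_powersetCard_choose_card_filter _ _ hj, card_filter_range_mod ht _ (mem_range.1 hi),
      card_range, nres]
  simp only [sum_justify ht, sum_comm (s := (range (r + s)).powersetCard r), sum_add_distrib,
    ← mul_sum]
  have hfirst (i : ℕ) (hi : i ∈ range t) : i * ∑ B ∈ (range (r + s)).powersetCard r,
      #(B.filter (· % t = i)) = i * nres r s t i * (r + s - 1).choose (r - 1) := by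
    simpa [mul_assoc] using congrArg (i * ·) (hcount 1 (by omega) i hi)
  rw [sum_congr rfl hfirst, sum_congr rfl (hcount 2 hr), ← sum_mul, ← sum_mul, mul_assoc]

theorem sum_powersetCard_sum_justify_sub (ht : 0 < t) (hr : 2 ≤ r) :
    ∑ B ∈ (range (r + s)).powersetCard r, ((∑ b ∈ justify t B, b) - r.choose 2)
      = (∑ i ∈ range t, i * nres r s t i) * (r + s - 2).choose (r - 1) := by
  have hle : ∀ B ∈ (range (r + s)).powersetCard r, r.choose 2 ≤ ∑ b ∈ justify t B, b :=
    fun B hB => by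
      simpa [card_justify ht, (mem_powersetCard.1 hB).2] using choose_two_le_sum (justify t B)
  have hpascal :
      (r + s - 1).choose (r - 1) = (r + s - 2).choose (r - 2) + (r + s - 2).choose (r - 1) := by
    have := Nat.choose_succ_succ' (r + s - 2) (r - 2)
    rwa [show r + s - 2 + 1 = r + s - 1 by omega, show r - 2 + 1 = r - 1 by omega] at this
  rw [sum_tsub_distrib _ hle, sum_const, card_powersetCard, card_range, smul_eq_mul,
    Nat.choose_mul hr, choose_two_eq_sum_nres ht, sum_add_distrib, ← mul_sum,
    sum_powersetCard_sum_justify ht hr, hpascal]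
  set S₁ := ∑ i ∈ range t, i * nres r s t i
  set S₂ := ∑ i ∈ range t, (nres r s t i).choose 2
  rw [show S₁ * ((r + s - 2).choose (r - 2) + (r + s - 2).choose (r - 1))
      + t * S₂ * (r + s - 2).choose (r - 2)
      = S₁ * (r + s - 2).choose (r - 1) + (S₁ + t * S₂) * (r + s - 2).choose (r - 2) by ring,
    Nat.add_sub_cancel]

theorem finsum_coreSize (ht : 0 < t) (hr : 2 ≤ r) :
    ∑ᶠ lam ∈ {lam : Fin r → ℕ | IsRectPartition r s lam}, (coreSize r t lam : ℝ)
      = ((∑ i ∈ range t, i * nres r s t i) * (r + s - 2).choose (r - 1) : ℕ) := by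
  rw [finsum_mem_eq_of_bijOn (betaSet r) (betaSet_bijOn r s)
    (g := fun B => (((∑ b ∈ justify t B, b) - r.choose 2 : ℕ) : ℝ))
    fun lam _ => by rw [Nat.choose_two_right]; rfl,
    finsum_mem_coe_finset, ← Nat.cast_sum, sum_powersetCard_sum_justify_sub ht hr]

theorem expected_scaled_coreSize_eq (ht : 0 < t) (hr : 2 ≤ r) :
    ((t : ℝ) / r) * ((1 / ((r + s).choose r : ℝ)) *
      ∑ᶠ lam ∈ {lam : Fin r → ℕ | IsRectPartition r s lam}, (coreSize r t lam : ℝ))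
      = (t * (∑ i ∈ range t, i * nres r s t i : ℕ) / (r + s)) * (s / (r + s - 1)) := by
  have hchoose := congrArg (Nat.cast : ℕ → ℝ) (Nat.add_choose_mul_mul r s (by omega))
  have hr' : (2 : ℝ) ≤ r := by exact_mod_cast hr
  have hN : (r : ℝ) + s - 1 ≠ 0 := by have : (0 : ℝ) ≤ s := s.cast_nonneg; linarith
  have hC : ((r + s).choose r : ℝ) ≠ 0 := by exact_mod_cast (Nat.choose_pos (by omega)).ne'
  push_cast [Nat.cast_sub (by omega : 1 ≤ r + s), Nat.cast_sub (by omega : 1 ≤ r)] at hchoose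
  rw [finsum_coreSize ht hr]
  push_cast
  field_simp
  linear_combination (-∑ i ∈ range t, (i : ℝ) * nres r s t i) * hchoose

end Counting

open Filter Topology

theorem tendsto_mul_div_div_self (t i : ℕ) (ht : 0 < t) :
    Tendsto (fun n : ℕ => ((t * ((n + t - 1 - i) / t) : ℕ) : ℝ) / n) atTop (𝓝 1) := by
  have hlower : Tendsto (fun n : ℕ => 1 - (i : ℝ) / n) atTop (𝓝 1) := by
    simpa using (tendsto_const_div_atTop_nhds_zero_nat (i : ℝ)).const_sub 1
  have hupper : Tendsto (fun n : ℕ => 1 + (t : ℝ) / n) atTop (𝓝 1) := by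
    simpa using (tendsto_const_div_atTop_nhds_zero_nat (t : ℝ)).const_add 1
  refine tendsto_of_tendsto_of_tendsto_of_le_of_le' hlower hupper ?_ ?_ <;>
    filter_upwards [eventually_gt_atTop 0] with n hn <;>
    have hn' : (0 : ℝ) < n := by exact_mod_cast hn
  · rw [one_sub_div hn'.ne', div_le_div_iff_of_pos_right hn', sub_le_iff_le_add]
    have := Nat.div_add_mod (n + t - 1 - i) t
    have := Nat.mod_lt (n + t - 1 - i) ht
    exact_mod_cast (by omega : n ≤ t * ((n + t - 1 - i) / t) + i)
  · rw [one_add_div hn'.ne', div_le_div_iff_of_pos_right hn']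
    have := Nat.div_add_mod (n + t - 1 - i) t
    exact_mod_cast (by omega : t * ((n + t - 1 - i) / t) ≤ n + t)

theorem tendsto_mul_sum_nres_div {ι : Type*} {l : Filter ι} {r s : ι → ℕ} {t : ℕ}
    (ht : 0 < t) (hN : Tendsto (fun k => r k + s k) l atTop) :
    Tendsto (fun k => (t * (∑ i ∈ range t, i * nres (r k) (s k) t i : ℕ) / (r k + s k) : ℝ))
      l (𝓝 (t.choose 2 : ℝ)) := by
  have hsum : Tendsto (fun k => ∑ i ∈ range t,
      (i : ℝ) * (((t * nres (r k) (s k) t i : ℕ) : ℝ) / (r k + s k : ℕ))) l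
      (𝓝 (∑ i ∈ range t, (i : ℝ) * 1)) :=
    tendsto_finsetSum _ fun i _ => ((tendsto_mul_div_div_self t i ht).comp hN).const_mul _
  rw [Nat.choose_two_right, ← sum_range_id]
  push_cast at hsum ⊢
  simp only [mul_one] at hsum
  refine hsum.congr fun k => ?_
  rw [mul_sum, sum_div]
  exact sum_congr rfl fun i _ => by ring

theorem tendsto_div_add_sub_one {ι : Type*} {l : Filter ι} {r s : ι → ℕ} {κ : ℝ}
    (hr : Tendsto r l atTop) (hratio : Tendsto (fun k => (s k : ℝ) / r k) l (𝓝 κ))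
    (hκ : 1 + κ ≠ 0) :
    Tendsto (fun k => (s k : ℝ) / (r k + s k - 1)) l (𝓝 (κ / (1 + κ))) := by
  have hinv : Tendsto (fun k => (r k : ℝ)⁻¹) l (𝓝 0) :=
    (tendsto_natCast_atTop_atTop.comp hr).inv_tendsto_atTop
  have h := hratio.div ((hratio.const_add 1).sub hinv) (by simpa using hκ)
  rw [sub_zero] at h
  refine h.congr' ?_
  filter_upwards [hr.eventually_gt_atTop 0] with k hk
  have : (r k : ℝ) ≠ 0 := by positivity
  simp only [Pi.div_apply]
  field_simp

theorem expected_scaled_core_size_limit_general (t : ℕ) (ht : 2 ≤ t) (κ : ℝ) (hκ : 0 < κ)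
    (r s : ℕ → ℕ)
    (hrlim : Filter.Tendsto r Filter.atTop Filter.atTop)
    (hratio : Filter.Tendsto (fun k => (s k : ℝ) / (r k : ℝ)) Filter.atTop (nhds κ)) :
    Filter.Tendsto
      (fun k => ((t : ℝ) / (r k : ℝ)) * ((1 / ((r k + s k).choose (r k) : ℝ)) *
        ∑ᶠ lam ∈ {lam : Fin (r k) → ℕ | IsRectPartition (r k) (s k) lam},
          (coreSize (r k) t lam : ℝ)))
      Filter.atTop
      (nhds ((t.choose 2 : ℝ) * (κ / (1 + κ)))) := by
  have ht₀ : 0 < t := by omega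
  have hN : Tendsto (fun k => r k + s k) atTop atTop :=
    tendsto_atTop_mono (fun k => Nat.le_add_right _ _) hrlim
  refine ((tendsto_mul_sum_nres_div ht₀ hN).mul
    (tendsto_div_add_sub_one hrlim hratio (by positivity))).congr' ?_
  filter_upwards [hrlim.eventually_ge_atTop 2] with k hk
  exact (expected_scaled_coreSize_eq ht₀ hk).symm

/-- As `r, s → ∞` with `s/r → κ > 0`, the expectation of `t·|core_t(λ)|/r`
for a uniformly random `λ ∈ Par_{r,s}` converges to `C(t,2) κ/(1+κ)`. -/
theorem expected_scaled_core_size_limit (t : ℕ) (ht : 2 ≤ t) (κ : ℝ) (hκ : 0 < κ)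
    (r s : ℕ → ℕ) (hr : ∀ k, 1 ≤ r k) (hs : ∀ k, 1 ≤ s k)
    (hrlim : Filter.Tendsto r Filter.atTop Filter.atTop)
    (hslim : Filter.Tendsto s Filter.atTop Filter.atTop)
    (hratio : Filter.Tendsto (fun k => (s k : ℝ) / (r k : ℝ)) Filter.atTop (nhds κ)) :
    Filter.Tendsto
      (fun k => ((t : ℝ) / (r k : ℝ)) * ((1 / ((r k + s k).choose (r k) : ℝ)) *
        ∑ᶠ lam ∈ {lam : Fin (r k) → ℕ | IsRectPartition (r k) (s k) lam},
          (coreSize (r k) t lam : ℝ)))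
      Filter.atTop
      (nhds ((t.choose 2 : ℝ) * (κ / (1 + κ)))) :=
  expected_scaled_core_size_limit_general t ht κ hκ r s hrlim hratio
end

section
/- Let t ≥ 2 be an integer, σ > 0 a real number, and u a real number with u < 1/(tσ²). Then the Gaussian-type integral over ℝ^{t−1} satisfies: ∫_{ℝ^{t−1}} exp( (ut/2 − 1/(2σ²)) · ( z_1² + z_2² + ... + z_{t−1}² + (z_1 + z_2 + ... + z_{t−1})² ) ) dz_1 ··· dz_{t−1} = sqrt( (2πσ²)^{t−1} / t ) · (1 − utσ²)^{−(t−1)/2}. In particular, if Z = (Z_1, ..., Z_{t−1}) has the centered multivariate normal density f(z) = sqrt( t/(2πσ²)^{t−1} ) · exp( −(1/(2σ²))( |z|² + (z_1+...+z_{t−1})² ) ) on ℝ^{t−1}, then E[ exp( (ut/2)( |Z|² + (Z_1+...+Z_{t−1})² ) ) ] = (1 − utσ²)^{−(t−1)/2}. -/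
open Finset

open MeasureTheory Real

/-!
The quadratic form `c |z|² + b (∑ zᵢ)²` on `ℝⁿ` is negative definite iff `c < 0` and
`c + n b < 0`. Completing the square in the first coordinate `x` of `z = (x, y)` gives
`c x² + b (x + ∑ yᵢ)² = (c + b) (x + b ∑ yᵢ / (c + b))² + (c b / (c + b)) (∑ yᵢ)²`,
so integrating out `x` leaves a one-dimensional Gaussian factor `√(π / -(c + b))` times the same
kind of form on `ℝⁿ⁻¹`, with `b` replaced by `c b / (c + b)`. Induction on `n` yields the
determinant formula `√(π / -c) ^ n * √(c / (c + n b))`.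
-/

theorem sqrt_div_pow {x y : ℝ} (hx : 0 ≤ x) (hy : 0 ≤ y) (n : ℕ) :
    √(x / y) ^ n = √(x ^ n) * y ^ (-(n / 2 : ℝ)) := by
  rw [← neg_div, rpow_div_two_eq_sqrt _ hy, rpow_neg (sqrt_nonneg _), rpow_natCast,
    sqrt_div' x hy, div_pow, div_eq_mul_inv, ← rpow_natCast (√x), ← rpow_div_two_eq_sqrt _ hx,
    sqrt_eq_rpow (x ^ n), ← rpow_natCast x, ← rpow_mul hx, div_eq_mul_one_div (n : ℝ)]

theorem integral_fin_succ_eq_integral_cons {α E : Type*} [MeasureSpace α]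
    [SigmaFinite (volume : Measure α)] [NormedAddCommGroup E] [NormedSpace ℝ E] {n : ℕ}
    {f : (Fin (n + 1) → α) → E} (hf : Integrable f) :
    ∫ z, f z = ∫ y, ∫ x, f (Fin.cons x y) := by
  have he := (volume_preserving_piFinSuccAbove (fun _ : Fin (n + 1) => α) 0).symm
  rw [← he.integral_comp', Measure.volume_eq_prod, integral_prod_symm]
  · simp [MeasurableEquiv.piFinSuccAbove_symm_apply, Fin.insertNthEquiv, Fin.insertNth_zero']
  · exact (he.integrable_comp_emb (MeasurableEquiv.measurableEmbedding _)).2 hf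

theorem integral_exp_mul_sq_add_mul_add_sq {c b : ℝ} (hcb : c + b < 0) (s : ℝ) :
    ∫ x, exp (c * x ^ 2 + b * (x + s) ^ 2) = √(π / -(c + b)) * exp (c * b / (c + b) * s ^ 2) := by
  have hne : c + b ≠ 0 := hcb.ne
  have hsq (x : ℝ) : c * x ^ 2 + b * (x + s) ^ 2 =
      -(-(c + b)) * (x + b * s / (c + b)) ^ 2 + c * b / (c + b) * s ^ 2 := by
    field_simp
    ring
  simp only [hsq, exp_add]
  rw [integral_mul_const, integral_add_right_eq_self (fun x => exp (-(-(c + b)) * x ^ 2)),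
    integral_gaussian]

theorem integrable_exp_mul_sum_sq_add_mul_sq_sum {n : ℕ} {c b : ℝ} (hc : c < 0)
    (hcb : c + n * b < 0) :
    Integrable fun z : Fin n → ℝ => exp (c * ∑ i, z i ^ 2 + b * (∑ i, z i) ^ 2) := by
  set a := c + n * max b 0
  have ha : a < 0 := by rcases le_total b 0 with h | h <;> simp [a, h, hc, hcb]
  have hbound (z : Fin n → ℝ) : c * ∑ i, z i ^ 2 + b * (∑ i, z i) ^ 2 ≤ a * ∑ i, z i ^ 2 := by
    have hcs : (∑ i, z i) ^ 2 ≤ n * ∑ i, z i ^ 2 := by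
      simpa using sq_sum_le_card_mul_sum_sq (s := univ) (f := z)
    have := le_max_left b 0
    have := le_max_right b 0
    nlinarith [sq_nonneg (∑ i, z i)]
  have hprod : Integrable fun z : Fin n → ℝ => ∏ i, exp (a * z i ^ 2) :=
    Integrable.fintype_prod (f := fun _ x => exp (a * x ^ 2))
      fun _ => by simpa using integrable_exp_neg_mul_sq (neg_pos.2 ha)
  refine hprod.mono' (by fun_prop) (ae_of_all _ fun z => ?_)
  rw [norm_of_nonneg (exp_pos _).le, ← exp_sum, ← mul_sum]
  exact exp_le_exp.2 (hbound z)

theorem integral_exp_mul_sum_sq_add_mul_sq_sum {n : ℕ} {c b : ℝ} (hc : c < 0)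
    (hcb : c + n * b < 0) :
    ∫ z : Fin n → ℝ, exp (c * ∑ i, z i ^ 2 + b * (∑ i, z i) ^ 2) =
      √(π / -c) ^ n * √(c / (c + n * b)) := by
  induction n generalizing b with
  | zero => simp [hc.ne, measureReal_def, volume_pi]
  | succ n ih =>
    push_cast at hcb ⊢
    have hcb₁ : c + b < 0 := by
      rcases le_total b 0 with h | h
      · linarith
      · nlinarith [(n.cast_nonneg : (0 : ℝ) ≤ n)]
    set b' := c * b / (c + b)
    have hcb' : c + n * b' = c * (c + (n + 1) * b) / (c + b) := by
      simp only [b']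
      field_simp [hcb₁.ne]
      ring
    have hcb'_neg : c + n * b' < 0 := by
      rw [hcb']
      exact div_neg_of_pos_of_neg (mul_pos_of_neg_of_neg hc hcb) hcb₁
    have hsplit (x : ℝ) (y : Fin n → ℝ) :
        exp (c * ∑ i, (Fin.cons x y : Fin (n + 1) → ℝ) i ^ 2 +
            b * (∑ i, (Fin.cons x y : Fin (n + 1) → ℝ) i) ^ 2) =
          exp (c * ∑ i, y i ^ 2) * exp (c * x ^ 2 + b * (x + ∑ i, y i) ^ 2) := by
      simp only [← exp_add, Fin.sum_univ_succ, Fin.cons_zero, Fin.cons_succ]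
      congr 1
      ring
    rw [integral_fin_succ_eq_integral_cons
      (integrable_exp_mul_sum_sq_add_mul_sq_sum hc (by push_cast; linarith))]
    have hinner (y : Fin n → ℝ) :
        ∫ x, exp (c * ∑ i, y i ^ 2) * exp (c * x ^ 2 + b * (x + ∑ i, y i) ^ 2) =
          exp (c * ∑ i, y i ^ 2 + b' * (∑ i, y i) ^ 2) * √(π / -(c + b)) := by
      rw [integral_const_mul, integral_exp_mul_sq_add_mul_add_sq hcb₁, exp_add]
      ring
    simp only [hsplit, hinner]
    rw [integral_mul_const, ih hcb'_neg, pow_succ, mul_assoc, mul_assoc]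
    congr 1
    rw [hcb', ← sqrt_mul, ← sqrt_mul]
    · congr 1
      field_simp [hcb₁.ne, hcb.ne, hc.ne]
    · exact div_nonneg pi_pos.le (neg_nonneg.2 hc.le)
    · exact div_nonneg_of_nonpos hc.le (by linarith)

theorem integral_exp_mul_sum_sq_add_sq_sum {n : ℕ} {c : ℝ} (hc : c < 0) :
    ∫ z : Fin n → ℝ, exp (c * (∑ i, z i ^ 2 + (∑ i, z i) ^ 2)) = √(π / -c) ^ n / √(n + 1) := by
  have hcn : c + n * c = c * (n + 1) := by ring
  simp_rw [mul_add]
  rw [integral_exp_mul_sum_sq_add_mul_sq_sum hc (by nlinarith [(n.cast_nonneg : (0 : ℝ) ≤ n)]),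
    hcn, div_mul_cancel_left₀ hc.ne, sqrt_inv, ← div_eq_mul_inv]

/-- A Gaussian-type integral over `ℝ^{t−1}`: for `σ > 0` and `u < 1/(tσ²)`,
`∫ exp((ut/2 − 1/(2σ²))(|z|² + (Σ z_i)²)) dz = √((2πσ²)^{t−1}/t) · (1 − utσ²)^{−(t−1)/2}`,
and consequently for `Z` with the stated multivariate normal density `f`,
`E[exp((ut/2)(|Z|² + (Σ Z_i)²))] = (1 − utσ²)^{−(t−1)/2}`. -/
theorem gaussian_mgf_integral (t : ℕ) (ht : 2 ≤ t) (σ u : ℝ) (hσ : 0 < σ)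
    (hu : u < 1 / ((t : ℝ) * σ ^ 2)) :
    (∫ z : Fin (t - 1) → ℝ,
        Real.exp ((u * (t : ℝ) / 2 - 1 / (2 * σ ^ 2)) *
          ((∑ i, z i ^ 2) + (∑ i, z i) ^ 2))) =
      Real.sqrt ((2 * Real.pi * σ ^ 2) ^ (t - 1) / (t : ℝ)) *
        (1 - u * (t : ℝ) * σ ^ 2) ^ (-(((t : ℝ) - 1) / 2)) ∧
    (∫ z : Fin (t - 1) → ℝ,
        (Real.sqrt ((t : ℝ) / (2 * Real.pi * σ ^ 2) ^ (t - 1)) *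
            Real.exp (-(1 / (2 * σ ^ 2)) * ((∑ i, z i ^ 2) + (∑ i, z i) ^ 2))) *
          Real.exp ((u * (t : ℝ) / 2) * ((∑ i, z i ^ 2) + (∑ i, z i) ^ 2))) =
      (1 - u * (t : ℝ) * σ ^ 2) ^ (-(((t : ℝ) - 1) / 2)) := by
  set n := t - 1
  have ht_eq : (t : ℝ) = n + 1 := by simp [n, Nat.cast_sub (by omega : 1 ≤ t)]
  have hA : 0 < 1 - u * t * σ ^ 2 := by
    rw [lt_div_iff₀ (by positivity)] at hu
    linarith
  set c := u * t / 2 - 1 / (2 * σ ^ 2) with hc_def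
  have hcA : -c = (1 - u * t * σ ^ 2) / (2 * σ ^ 2) := by
    rw [hc_def]
    field_simp
    ring
  have hc : c < 0 := neg_pos.1 (hcA ▸ by positivity)
  have hπc : π / -c = 2 * π * σ ^ 2 / (1 - u * t * σ ^ 2) := by
    rw [hcA]
    field_simp
  have hgauss : ∫ z : Fin n → ℝ, exp (c * ((∑ i, z i ^ 2) + (∑ i, z i) ^ 2)) =
      √((2 * π * σ ^ 2) ^ n / t) * (1 - u * t * σ ^ 2) ^ (-((t - 1) / 2 : ℝ)) := by
    rw [integral_exp_mul_sum_sq_add_sq_sum hc, hπc, sqrt_div_pow (by positivity) hA.le, ht_eq,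
      add_sub_cancel_right, sqrt_div' _ (by positivity)]
    ring
  refine ⟨hgauss, ?_⟩
  have hdensity (z : Fin n → ℝ) :
      √(t / (2 * π * σ ^ 2) ^ n) * exp (-(1 / (2 * σ ^ 2)) * ((∑ i, z i ^ 2) + (∑ i, z i) ^ 2)) *
          exp (u * t / 2 * ((∑ i, z i ^ 2) + (∑ i, z i) ^ 2)) =
        √(t / (2 * π * σ ^ 2) ^ n) * exp (c * ((∑ i, z i ^ 2) + (∑ i, z i) ^ 2)) := by
    rw [mul_assoc, ← exp_add, ← add_mul, hc_def, neg_add_eq_sub]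
  have hnorm : √(t / (2 * π * σ ^ 2) ^ n) * √((2 * π * σ ^ 2) ^ n / t) = 1 := by
    rw [← inv_div, sqrt_inv, inv_mul_cancel₀ (by positivity)]
  simp only [hdensity, integral_const_mul, hgauss, ← mul_assoc, hnorm, one_mul]
end
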